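/- Let P be a row-stochastic matrix over a finite nonempty state set S, let μ₀ be an initial probability distribution on S, and let g : S → ℝ be a cost function with |g(s)| ≤ g_max for all s. Then the long-term average cost λ = lim_{K→∞} (1/K) Σ_{k=1}^{K} Σ_{s∈S} (μ₀ P^k)(s) · g(s) exists (the limit is a real number), and it satisfies |λ| ≤ g_max. -/

import Mathlib

/-!
A row-stochastic matrix `P` does not increase the sup norm, so `x ↦ P *ᵥ x` is a contraction of
the finite-dimensional space `S → ℝ`. For such a contraction `f` the fixed space `ker (f - 1)`
meets `range (f - 1)` only in `0` (if `f y = y` and `y = f x - x`, then `fⁿ x = x + n • y` stays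
bounded), so by rank–nullity the two are complementary; this is the splitting behind the mean
ergodic theorem, and the Cesàro averages of `Pᵏ *ᵥ (P *ᵥ g)` converge. Pairing with `μ₀` gives
the limit `λ`, and `|λ| ≤ g_max` because every `μ₀ Pᵏ` is a probability vector.
-/

open Filter Topology Finset Matrix

namespace LinearMap

variable {𝕜 E : Type*} [RCLike 𝕜] [NormedAddCommGroup E] [NormedSpace 𝕜 E] {f : E →ₗ[𝕜] E}

lemma norm_iterate_apply_le (hf : ∀ x, ‖f x‖ ≤ ‖x‖) (n : ℕ) (x : E) : ‖f^[n] x‖ ≤ ‖x‖ := by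
  induction n with
  | zero => rfl
  | succ n ih =>
    rw [Function.iterate_succ_apply']
    exact (hf _).trans ih

lemma disjoint_eqLocus_one_range_sub_one (hf : ∀ x, ‖f x‖ ≤ ‖x‖) :
    Disjoint (eqLocus f 1) (range (f - 1)) := by
  rw [Submodule.disjoint_def]
  rintro _ hfix ⟨x, rfl⟩
  set y := (f - 1) x
  have hiter : ∀ n : ℕ, f^[n] x = x + (n : 𝕜) • y := by
    intro n
    induction n with
    | zero => simp
    | succ n ih =>
      have hy : f y = y := hfix
      rw [Function.iterate_succ_apply', ih, map_add, map_smul, hy, Nat.cast_succ, add_smul,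
        one_smul]
      simp only [y, sub_apply, Module.End.one_apply]
      abel
  have hbound : ∀ n : ℕ, (n : ℝ) * ‖y‖ ≤ 2 * ‖x‖ := fun n => calc
    (n : ℝ) * ‖y‖ = ‖f^[n] x - x‖ := by
      rw [hiter, add_sub_cancel_left, norm_smul, RCLike.norm_natCast]
    _ ≤ ‖f^[n] x‖ + ‖x‖ := norm_sub_le _ _
    _ ≤ 2 * ‖x‖ := by linarith [norm_iterate_apply_le hf n x]
  refine norm_le_zero_iff.1 (not_lt.1 fun hy => ?_)
  obtain ⟨n, hn⟩ := exists_nat_gt (2 * ‖x‖ / ‖y‖)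
  rw [div_lt_iff₀ hy] at hn
  linarith [hbound n]

variable [FiniteDimensional 𝕜 E]

lemma isCompl_eqLocus_one_range_sub_one (hf : ∀ x, ‖f x‖ ≤ ‖x‖) :
    IsCompl (eqLocus f 1) (range (f - 1)) := by
  refine (Submodule.isCompl_iff_disjoint _ _ ?_).2 (disjoint_eqLocus_one_range_sub_one hf)
  rw [eqLocus_eq_ker_sub, add_comm, finrank_range_add_finrank_ker]

lemma exists_tendsto_birkhoffAverage (hf : ∀ x, ‖f x‖ ≤ ‖x‖) (x : E) :
    ∃ L, Tendsto (birkhoffAverage 𝕜 f _root_.id · x) atTop (𝓝 L) := by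
  have hc := isCompl_eqLocus_one_range_sub_one hf
  have hlip : LipschitzWith 1 f := by
    simpa using AddMonoidHomClass.lipschitz_of_bound f 1 (by simpa using hf)
  refine ⟨_, f.tendsto_birkhoffAverage_of_ker_subset_closure hlip
    (Submodule.projectionOnto _ _ hc).toContinuousLinearMap
    (Submodule.projectionOnto_apply_left hc) ?_ x⟩
  change (ker (Submodule.projectionOnto _ _ hc) : Set E) ⊆ _
  rw [Submodule.ker_projectionOnto]
  exact subset_closure

end LinearMap

namespace Matrix

variable {n : Type*} [Fintype n] [DecidableEq n] {M : Matrix n n ℝ}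

lemma norm_mulVec_le_of_mem_rowStochastic (hM : M ∈ rowStochastic ℝ n) (x : n → ℝ) :
    ‖M *ᵥ x‖ ≤ ‖x‖ := by
  refine (pi_norm_le_iff_of_nonneg (norm_nonneg x)).2 fun i => ?_
  calc ‖(M *ᵥ x) i‖ = |∑ j, M i j * x j| := rfl
    _ ≤ ∑ j, |M i j * x j| := abs_sum_le_sum_abs _ _
    _ ≤ ∑ j, M i j * ‖x‖ := by
      refine sum_le_sum fun j _ => ?_
      rw [abs_mul, abs_of_nonneg (nonneg_of_mem_rowStochastic hM)]
      exact mul_le_mul_of_nonneg_left (norm_le_pi_norm x j) (nonneg_of_mem_rowStochastic hM)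
    _ = ‖x‖ := by rw [← sum_mul, sum_row_of_mem_rowStochastic hM, one_mul]

lemma vecMul_mem_stdSimplex_of_mem_rowStochastic {μ : n → ℝ} (hμ : μ ∈ stdSimplex ℝ n)
    (hM : M ∈ rowStochastic ℝ n) : μ ᵥ* M ∈ stdSimplex ℝ n := by
  refine ⟨nonneg_vecMul_of_mem_rowStochastic hM hμ.1, ?_⟩
  rw [← dotProduct_one]
  exact vecMul_dotProduct_one_eq_one_rowStochastic hM (by rw [dotProduct_one, hμ.2])

lemma iterate_mulVecLin_apply (M : Matrix n n ℝ) (k : ℕ) (x : n → ℝ) :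
    M.mulVecLin^[k] x = M ^ k *ᵥ x := by
  induction k with
  | zero => simp
  | succ k ih => rw [Function.iterate_succ_apply', ih, mulVecLin_apply, mulVec_mulVec, ← pow_succ']

lemma exists_tendsto_cesaro_vecMul_pow_dotProduct (hM : M ∈ rowStochastic ℝ n) (μ g : n → ℝ) :
    ∃ l, Tendsto (fun K : ℕ => (1 / (K : ℝ)) * ∑ k ∈ Icc 1 K, (μ ᵥ* M ^ k) ⬝ᵥ g)
      atTop (𝓝 l) := by
  obtain ⟨L, hL⟩ := M.mulVecLin.exists_tendsto_birkhoffAverage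
    (norm_mulVec_le_of_mem_rowStochastic hM) (M *ᵥ g)
  refine ⟨μ ⬝ᵥ L, ((continuous_const.dotProduct continuous_id).tendsto L |>.comp hL).congr
    fun K => ?_⟩
  -- the `k`-th Birkhoff term is `M ^ (k + 1) *ᵥ g`, whence the shift from `range K` to `Icc 1 K`
  simp only [Function.comp_apply, birkhoffAverage, birkhoffSum, dotProduct_smul, dotProduct_sum,
    id_eq, iterate_mulVecLin_apply, mulVec_mulVec, ← pow_succ, dotProduct_mulVec, smul_eq_mul,
    one_div]
  rw [← Ico_add_one_right_eq_Icc, sum_Ico_eq_sum_range, add_tsub_cancel_right]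
  simp only [add_comm 1]

end Matrix

lemma abs_dotProduct_le_of_mem_stdSimplex {ι : Type*} [Fintype ι] {ν g : ι → ℝ} {c : ℝ}
    (hν : ν ∈ stdSimplex ℝ ι) (hg : ∀ i, |g i| ≤ c) : |ν ⬝ᵥ g| ≤ c :=
  calc |ν ⬝ᵥ g| ≤ ∑ i, |ν i * g i| := abs_sum_le_sum_abs _ _
    _ ≤ ∑ i, ν i * c := by
      refine sum_le_sum fun i _ => ?_
      rw [abs_mul, abs_of_nonneg (hν.1 i)]
      exact mul_le_mul_of_nonneg_left (hg i) (hν.1 i)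
    _ = c := by rw [← sum_mul, hν.2, one_mul]

lemma abs_le_of_tendsto_cesaro {a : ℕ → ℝ} {c l : ℝ} (ha : ∀ k, |a k| ≤ c)
    (h : Tendsto (fun K : ℕ => (1 / (K : ℝ)) * ∑ k ∈ Icc 1 K, a k) atTop (𝓝 l)) : |l| ≤ c := by
  refine le_of_tendsto h.abs (eventually_atTop.2 ⟨1, fun K hK => ?_⟩)
  have hK : (0 : ℝ) < K := by exact_mod_cast hK
  calc |(1 / (K : ℝ)) * ∑ k ∈ Icc 1 K, a k| ≤ (1 / (K : ℝ)) * ∑ k ∈ Icc 1 K, c := by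
        rw [abs_mul, abs_of_pos (by positivity)]
        gcongr
        exact (abs_sum_le_sum_abs _ _).trans (sum_le_sum fun k _ => ha k)
    _ = c := by
        rw [sum_const, Nat.card_Icc, add_tsub_cancel_right, nsmul_eq_mul]
        field_simp

theorem long_term_average_cost_exists_general
    {S : Type*} [Fintype S] [DecidableEq S]
    (P : Matrix S S ℝ)
    (hnonneg : ∀ i j : S, 0 ≤ P i j)
    (hrow : ∀ i : S, ∑ j : S, P i j = 1)
    (μ₀ : S → ℝ)
    (hμnonneg : ∀ s : S, 0 ≤ μ₀ s)
    (hμsum : ∑ s : S, μ₀ s = 1)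
    (g : S → ℝ) (gmax : ℝ)
    (hg : ∀ s : S, |g s| ≤ gmax) :
    ∃ lam : ℝ,
      Tendsto
        (fun K : ℕ => (1 / (K : ℝ)) *
          ∑ k ∈ Finset.Icc 1 K, ∑ s : S, Matrix.vecMul μ₀ (P ^ k) s * g s)
        atTop (nhds lam) ∧ |lam| ≤ gmax := by
  have hP : P ∈ rowStochastic ℝ S := mem_rowStochastic_iff_sum.2 ⟨hnonneg, hrow⟩
  have hμ : μ₀ ∈ stdSimplex ℝ S := ⟨hμnonneg, hμsum⟩
  obtain ⟨lam, hlam⟩ := exists_tendsto_cesaro_vecMul_pow_dotProduct hP μ₀ g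
  exact ⟨lam, hlam, abs_le_of_tendsto_cesaro (fun k => abs_dotProduct_le_of_mem_stdSimplex
    (vecMul_mem_stdSimplex_of_mem_rowStochastic hμ (pow_mem hP k)) hg) hlam⟩

/-- for a row-stochastic matrix `P` over a finite nonempty state
set `S`, an initial probability distribution `μ₀` on `S`, and a cost function
`g : S → ℝ` with `|g s| ≤ g_max`, the long-term average cost
`λ = lim_{K→∞} (1/K) ∑_{k=1}^{K} ∑_s (μ₀ P^k)(s) · g(s)` exists and
satisfies `|λ| ≤ g_max`. -/
theorem long_term_average_cost_exists
    {S : Type*} [Fintype S] [Nonempty S] [DecidableEq S]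
    (P : Matrix S S ℝ)
    (hnonneg : ∀ i j : S, 0 ≤ P i j)
    (hrow : ∀ i : S, ∑ j : S, P i j = 1)
    (μ₀ : S → ℝ)
    (hμnonneg : ∀ s : S, 0 ≤ μ₀ s)
    (hμsum : ∑ s : S, μ₀ s = 1)
    (g : S → ℝ) (gmax : ℝ)
    (hg : ∀ s : S, |g s| ≤ gmax) :
    ∃ lam : ℝ,
      Tendsto
        (fun K : ℕ => (1 / (K : ℝ)) *
          ∑ k ∈ Finset.Icc 1 K, ∑ s : S, Matrix.vecMul μ₀ (P ^ k) s * g s)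
        atTop (nhds lam) ∧ |lam| ≤ gmax :=
  long_term_average_cost_exists_general P hnonneg hrow μ₀ hμnonneg hμsum g gmax hg
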